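/- Let t' ≤ t be natural numbers, let α, β, κ, α', β' and, for each i ∈ {1,…,t}, α^i, β^i, κ^i be finitely supported sequences of non-negative integers, and let d, d', a and d^1,…,d^t, m^1,…,m^t be integers. Assume: (i) I(α+β+κ) = 3d − 1 + |β| − |κ|; (ii) for each i with 1 ≤ i ≤ t': Iα^i + m^i + Iβ^i + Iκ^i = 3d^i − 1 + |β^i| − |κ^i|; (iii) for each i with t' < i ≤ t: Iα^i + Iβ^i + m^i + Iκ^i = 3d^i + |β^i| − |κ^i|; (iv) α = α' + ∑_{i=1}^t α^i and β = β' + ∑_{i=1}^t β^i; (v) |κ| = 1 + ∑_{i=1}^t |κ^i| and Iκ = a + ∑_{i=1}^t Iκ^i; (vi) d = d' + ∑_{i=1}^t d^i; (vii) m^i = d^i − I(α^i + β^i) for all 1 ≤ i ≤ t; (viii) d = I(α + β). Then the valence condition 2d' + t' + |β'| = a + 2 and the divergence condition d' + ∑_{i=1}^t m^i = I(α' + β') both hold. -/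

import Mathlib

/-!
Both identities are bookkeeping with the additive functionals `I` and `|·|`. Summing the
degree conditions of the `t` components and substituting `m^i = d^i − I(α^i + β^i)`
gives `∑ Iκ^i = 2 ∑ d^i − t' + ∑ |β^i| − ∑ |κ^i|`, each of the first `t'` components
contributing a `−1`. Subtracting this from the degree condition of the whole diagram,
rewritten with `d = I(α + β)` as `Iκ = 2d − 1 + |β| − |κ|`, leaves exactly the valence
condition at `v'`. The divergence condition is `d = I(α + β)` with the components' parts removed.
-/

/-- For a finitely supported sequence `α` of non-negative integers,
`|α| := ∑_i α_i`. -/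
def absSize (α : ℕ →₀ ℕ) : ℕ := α.sum fun _ n => n

/-- For a finitely supported sequence `α` of non-negative integers,
`Iα := ∑_i i·α_i`. -/
def Iwt (α : ℕ →₀ ℕ) : ℕ := α.sum fun i n => i * n

lemma Iwt_add (x y : ℕ →₀ ℕ) : Iwt (x + y) = Iwt x + Iwt y :=
  Finsupp.sum_add_index' (fun i => mul_zero i) (fun i => mul_add i)

lemma absSize_add (x y : ℕ →₀ ℕ) : absSize (x + y) = absSize x + absSize y :=
  Finsupp.sum_add_index' (fun _ => rfl) (fun _ _ _ => rfl)

lemma Iwt_sum {ι : Type*} (s : Finset ι) (f : ι → ℕ →₀ ℕ) :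
    Iwt (∑ i ∈ s, f i) = ∑ i ∈ s, Iwt (f i) :=
  map_sum (⟨⟨Iwt, Finsupp.sum_zero_index⟩, Iwt_add⟩ : (ℕ →₀ ℕ) →+ ℕ) f s

lemma absSize_sum {ι : Type*} (s : Finset ι) (f : ι → ℕ →₀ ℕ) :
    absSize (∑ i ∈ s, f i) = ∑ i ∈ s, absSize (f i) :=
  map_sum (⟨⟨absSize, Finsupp.sum_zero_index⟩, absSize_add⟩ : (ℕ →₀ ℕ) →+ ℕ) f s

lemma Fin.sum_ite_val_lt_one_zero {t t' : ℕ} (htt : t' ≤ t) :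
    ∑ i : Fin t, (if (i : ℕ) < t' then (1 : ℤ) else 0) = t' := by
  rw [Finset.sum_boole, Fin.card_filter_val_lt, min_eq_right htt]

lemma sum_Iwt_components_kappa {t t' : ℕ} (htt : t' ≤ t)
    (αi βi κi : Fin t → ℕ →₀ ℕ) (di m : Fin t → ℤ)
    (hchosen : ∀ i : Fin t, (i : ℕ) < t' →
      (Iwt (αi i) : ℤ) + m i + (Iwt (βi i) : ℤ) + (Iwt (κi i) : ℤ)
        = 3 * di i - 1 + (absSize (βi i) : ℤ) - (absSize (κi i) : ℤ))
    (hfree : ∀ i : Fin t, t' ≤ (i : ℕ) →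
      (Iwt (αi i) : ℤ) + (Iwt (βi i) : ℤ) + m i + (Iwt (κi i) : ℤ)
        = 3 * di i + (absSize (βi i) : ℤ) - (absSize (κi i) : ℤ))
    (hweight : ∀ i : Fin t, m i = di i - (Iwt (αi i + βi i) : ℤ)) :
    ∑ i, (Iwt (κi i) : ℤ)
      = 2 * ∑ i, di i - t' + ∑ i, (absSize (βi i) : ℤ) - ∑ i, (absSize (κi i) : ℤ) := by
  have component : ∀ i, (Iwt (κi i) : ℤ) = 2 * di i - (if (i : ℕ) < t' then 1 else 0)
      + absSize (βi i) - absSize (κi i) := by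
    intro i
    have hmi := hweight i
    rw [Iwt_add, Nat.cast_add] at hmi
    split_ifs with hi
    · linarith [hchosen i hi]
    · linarith [hfree i (not_lt.mp hi)]
  rw [Finset.sum_congr rfl fun i _ => component i]
  simp only [Finset.sum_add_distrib, Finset.sum_sub_distrib, ← Finset.mul_sum,
    Fin.sum_ite_val_lt_one_zero htt]

/-- In the proof of the Caporaso–Harris formula for Psi-floor diagrams, the
largest non-α vertex `v'` (of degree `d'` and Psi-power `a`, with `t`
adjacent components of which the first `t'` are attached by chosen edges of
weights `m^i`, and residual sequences `α', β'`) automatically satisfies the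
valence condition `2d' + t' + |β'| = a + 2` and the divergence condition
`d' + ∑ m^i = I(α' + β')`. -/
theorem caporaso_harris_valence_and_divergence
    (t t' : ℕ) (htt : t' ≤ t)
    (α β κ α' β' : ℕ →₀ ℕ) (αi βi κi : Fin t → (ℕ →₀ ℕ))
    (d d' a : ℤ) (di m : Fin t → ℤ)
    (h1 : (Iwt (α + β + κ) : ℤ) = 3 * d - 1 + (absSize β : ℤ) - (absSize κ : ℤ))
    (h2 : ∀ i : Fin t, (i : ℕ) < t' →
      (Iwt (αi i) : ℤ) + m i + (Iwt (βi i) : ℤ) + (Iwt (κi i) : ℤ)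
        = 3 * di i - 1 + (absSize (βi i) : ℤ) - (absSize (κi i) : ℤ))
    (h3 : ∀ i : Fin t, t' ≤ (i : ℕ) →
      (Iwt (αi i) : ℤ) + (Iwt (βi i) : ℤ) + m i + (Iwt (κi i) : ℤ)
        = 3 * di i + (absSize (βi i) : ℤ) - (absSize (κi i) : ℤ))
    (h4 : α = α' + ∑ i, αi i)
    (h5 : β = β' + ∑ i, βi i)
    (h6 : (absSize κ : ℤ) = 1 + ∑ i, (absSize (κi i) : ℤ))
    (h7 : (Iwt κ : ℤ) = a + ∑ i, (Iwt (κi i) : ℤ))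
    (h8 : d = d' + ∑ i, di i)
    (h9 : ∀ i : Fin t, m i = di i - (Iwt (αi i + βi i) : ℤ))
    (h10 : d = (Iwt (α + β) : ℤ)) :
    2 * d' + (t' : ℤ) + (absSize β' : ℤ) = a + 2 ∧
      d' + ∑ i, m i = (Iwt (α' + β') : ℤ) := by
  have hκ := sum_Iwt_components_kappa htt αi βi κi di m h2 h3 h9
  have hm : ∑ i, m i = ∑ i, di i - ∑ i, (Iwt (αi i) : ℤ) - ∑ i, (Iwt (βi i) : ℤ) := by
    simp only [h9, Iwt_add, Nat.cast_add, Finset.sum_sub_distrib, Finset.sum_add_distrib]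
    ring
  subst h4 h5
  simp only [Iwt_add, absSize_add, Iwt_sum, absSize_sum, Nat.cast_add, Nat.cast_sum]
    at h1 h10 ⊢
  constructor <;> linarith
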